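/- Let Γ ⊆ Γ' be closed subspaces of a complex Hilbert space Ĥ, β = Γ' ∩ Γ^⊥, and let N ⊆ β be a closed subspace. Set E = β ∩ N^⊥ (the orthogonal complement of N in β) and F = Ĥ ∩ Γ'^⊥, so that Ĥ decomposes orthogonally as (N ⊕ F) ⊕ (E ⊕ Γ). Then a closed subspace M ⊆ Ĥ is transversal to (Γ,Γ') and satisfies γ_!M = N if and only if M is the graph {v + μ(v) : v ∈ N ⊕ F} of a (necessarily unique) bounded linear operator μ : N ⊕ F → E ⊕ Γ such that P_E(μ(v)) = 0 for all v ∈ N. This gives a canonical bijection between the set T_N of such subspaces M and the closed linear subspace of B(N ⊕ F, E ⊕ Γ) cut out by this condition, under which the zero operator corresponds to M = N ⊕ F. -/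

import Mathlib

noncomputable section

open Classical in
/-- Orthogonal projection onto a closed (complete) submodule, as a continuous linear map
on the ambient space (defined to be `0` on non-complete submodules). -/
noncomputable def orthProj {W : Type*} [NormedAddCommGroup W] [InnerProductSpace ℂ W]
    (M : Submodule ℂ W) : W →L[ℂ] W :=
  if h : IsComplete (M : Set W) then
    haveI : CompleteSpace M := h.completeSpace_coe
    M.subtypeL.comp (M.orthogonalProjectionOnto)
  else 0

/-- `(M, N)` is a Fredholm pair of subspaces of `W`: the sum is closed, the intersection
is finite-dimensional and the sum has finite codimension. -/
def FredholmPair {W : Type*} [NormedAddCommGroup W] [InnerProductSpace ℂ W]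
    (M N : Submodule ℂ W) : Prop :=
  IsClosed ((M ⊔ N : Submodule ℂ W) : Set W) ∧
  FiniteDimensional ℂ ↥(M ⊓ N) ∧
  FiniteDimensional ℂ (W ⧸ (M ⊔ N))

/-- `(M, N)` is a transversal pair of subspaces of `W`. -/
def TransversalPair {W : Type*} [NormedAddCommGroup W] [InnerProductSpace ℂ W]
    (M N : Submodule ℂ W) : Prop :=
  M ⊓ N = ⊥ ∧ M ⊔ N = ⊤

/-- `(L, N)` is a Fredholm pair of subspaces of the subspace `β` of `W` (the codimension
is computed inside `β`). -/
def FredholmPairIn {W : Type*} [NormedAddCommGroup W] [InnerProductSpace ℂ W]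
    (β L N : Submodule ℂ W) : Prop :=
  IsClosed ((L ⊔ N : Submodule ℂ W) : Set W) ∧
  FiniteDimensional ℂ ↥(L ⊓ N) ∧
  FiniteDimensional ℂ (↥β ⧸ Submodule.comap β.subtype (L ⊔ N))

/-- `(L, N)` is a transversal pair of subspaces of the subspace `β` of `W`. -/
def TransversalPairIn {W : Type*} [NormedAddCommGroup W] [InnerProductSpace ℂ W]
    (β L N : Submodule ℂ W) : Prop :=
  L ⊓ N = ⊥ ∧ L ⊔ N = β

/-- The push-forward `γ_!M = γ(M ∩ Γ')`, where `β = Γ' ∩ Γ^⊥` and `γ` is the restriction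
to `Γ'` of the orthogonal projection onto `β`. -/
def gammaPush {W : Type*} [NormedAddCommGroup W] [InnerProductSpace ℂ W]
    (Γ Γ' M : Submodule ℂ W) : Submodule ℂ W :=
  (M ⊓ Γ').map (orthProj (Γ' ⊓ Γᗮ) : W →ₗ[ℂ] W)

/-- `M` is Fredholm with respect to `(Γ, Γ')`: the pair `(M, Γ)` is lower semi-Fredholm
and the pair `(M, Γ')` is upper semi-Fredholm. -/
def FredholmWrt {W : Type*} [NormedAddCommGroup W] [InnerProductSpace ℂ W]
    (Γ Γ' M : Submodule ℂ W) : Prop :=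
  (IsClosed ((M ⊔ Γ : Submodule ℂ W) : Set W) ∧ FiniteDimensional ℂ ↥(M ⊓ Γ)) ∧
  (IsClosed ((M ⊔ Γ' : Submodule ℂ W) : Set W) ∧ FiniteDimensional ℂ (W ⧸ (M ⊔ Γ')))

/-- `M` is transversal to `(Γ, Γ')`: `M + Γ` is closed, `M ∩ Γ = 0` and `M + Γ' = W`. -/
def TransversalWrt {W : Type*} [NormedAddCommGroup W] [InnerProductSpace ℂ W]
    (Γ Γ' M : Submodule ℂ W) : Prop :=
  IsClosed ((M ⊔ Γ : Submodule ℂ W) : Set W) ∧ M ⊓ Γ = ⊥ ∧ M ⊔ Γ' = ⊤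

section Helpers
variable {W : Type*} [NormedAddCommGroup W] [InnerProductSpace ℂ W]

theorem orthProj_apply (S : Submodule ℂ W) (hS : IsClosed (S : Set W)) [CompleteSpace W] (x : W) :
    haveI : CompleteSpace S := hS.completeSpace_coe
    orthProj S x = (S.orthogonalProjectionOnto x : W) := by
  haveI : CompleteSpace S := hS.completeSpace_coe
  rw [orthProj, dif_pos hS.isComplete]
  rfl

theorem orthProj_mem (S : Submodule ℂ W) (hS : IsClosed (S : Set W)) [CompleteSpace W] (x : W) :
    orthProj S x ∈ S := by
  haveI : CompleteSpace S := hS.completeSpace_coe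
  rw [orthProj_apply S hS]
  exact (S.orthogonalProjectionOnto x).2

theorem orthProj_eq_self (S : Submodule ℂ W) (hS : IsClosed (S : Set W)) [CompleteSpace W]
    {x : W} (hx : x ∈ S) : orthProj S x = x := by
  haveI : CompleteSpace S := hS.completeSpace_coe
  rw [orthProj_apply S hS, Submodule.coe_orthogonalProjectionOnto_apply,
    Submodule.starProjection_eq_self_iff.2 hx]

theorem orthProj_eq_zero (S : Submodule ℂ W) (hS : IsClosed (S : Set W)) [CompleteSpace W]
    {x : W} (hx : x ∈ Sᗮ) : orthProj S x = 0 := by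
  haveI : CompleteSpace S := hS.completeSpace_coe
  rw [orthProj_apply S hS, Submodule.orthogonalProjectionOnto_apply_of_mem_orthogonal hx]
  rfl

theorem norm_le_of_orth {x y : W} (h : inner (𝕜 := ℂ) x y = 0) : ‖x‖ ≤ ‖x + y‖ := by
  have := norm_add_sq_eq_norm_sq_add_norm_sq_of_inner_eq_zero x y h
  nlinarith [norm_nonneg x, norm_nonneg y, norm_nonneg (x + y)]

theorem isClosed_sup_orth [CompleteSpace W] (P Q : Submodule ℂ W) (hP : IsClosed (P : Set W))
    (hQ : IsClosed (Q : Set W)) (hPQ : P ≤ Qᗮ) :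
    IsClosed ((P ⊔ Q : Submodule ℂ W) : Set W) := by
  haveI : CompleteSpace P := hP.completeSpace_coe
  haveI : CompleteSpace Q := hQ.completeSpace_coe
  set f : (P × Q) →L[ℂ] W :=
    P.subtypeL.comp (ContinuousLinearMap.fst ℂ P Q) +
      Q.subtypeL.comp (ContinuousLinearMap.snd ℂ P Q) with hf
  have hfapp : ∀ z : P × Q, f z = (z.1 : W) + (z.2 : W) := fun z => rfl
  have hanti : AntilipschitzWith 1 f := by
    apply f.antilipschitz_of_bound
    intro z
    rw [hfapp, NNReal.coe_one, one_mul]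
    have horth : inner (𝕜 := ℂ) ((z.1 : W)) ((z.2 : W)) = 0 :=
      (Q.mem_orthogonal' _).1 (hPQ z.1.2) _ z.2.2
    have h1 : ‖(z.1 : W)‖ ≤ ‖(z.1 : W) + (z.2 : W)‖ := norm_le_of_orth horth
    have h2 : ‖(z.2 : W)‖ ≤ ‖(z.1 : W) + (z.2 : W)‖ := by
      rw [add_comm]
      exact norm_le_of_orth (inner_eq_zero_symm.1 horth)
    rw [Prod.norm_def]
    exact max_le h1 h2
  have hrange : Set.range f = ((P ⊔ Q : Submodule ℂ W) : Set W) := by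
    ext x
    rw [Set.mem_range, SetLike.mem_coe, Submodule.mem_sup]
    constructor
    · rintro ⟨z, rfl⟩
      exact ⟨z.1, z.1.2, z.2, z.2.2, (hfapp z).symm⟩
    · rintro ⟨a, ha, b, hb, rfl⟩
      exact ⟨(⟨a, ha⟩, ⟨b, hb⟩), rfl⟩
  rw [← hrange]
  exact hanti.isClosed_range f.uniformContinuous

end Helpers

/-- with `β = Γ' ∩ Γ^⊥`, `E = β ∩ N^⊥`, `F = Γ'^⊥` (so that
`Ĥ = (N ⊕ F) ⊕ (E ⊕ Γ)` orthogonally), a closed subspace `M` is transversal to `(Γ, Γ')`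
with `γ_!M = N` iff `M` is the graph of a unique bounded operator
`μ : N ⊕ F → E ⊕ Γ` with `P_E ∘ μ|_N = 0`; the zero operator corresponds to
`M = N ⊕ F`. -/
theorem statement_15
    {W : Type*} [NormedAddCommGroup W] [InnerProductSpace ℂ W] [CompleteSpace W]
    (Γ Γ' N : Submodule ℂ W)
    (hΓ : IsClosed ((Γ : Submodule ℂ W) : Set W))
    (hΓ' : IsClosed ((Γ' : Submodule ℂ W) : Set W))
    (hle : Γ ≤ Γ')
    (hN : IsClosed ((N : Submodule ℂ W) : Set W))
    (hNβ : N ≤ Γ' ⊓ Γᗮ) :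
    (∀ M : Submodule ℂ W,
      (IsClosed ((M : Submodule ℂ W) : Set W) ∧ TransversalWrt Γ Γ' M ∧
          gammaPush Γ Γ' M = N) ↔
        (∃! μ : ↥(N ⊔ Γ'ᗮ) →L[ℂ] ↥(((Γ' ⊓ Γᗮ) ⊓ Nᗮ) ⊔ Γ),
          (M : Set W) = Set.range (fun v : ↥(N ⊔ Γ'ᗮ) => (v : W) + ((μ v : W))) ∧
          (∀ v : ↥(N ⊔ Γ'ᗮ), (v : W) ∈ N →
            orthProj ((Γ' ⊓ Γᗮ) ⊓ Nᗮ) ((μ v : W)) = 0))) ∧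
    ((N ⊔ Γ'ᗮ : Submodule ℂ W) : Set W) =
      Set.range (fun v : ↥(N ⊔ Γ'ᗮ) =>
        (v : W) + (((0 : ↥(N ⊔ Γ'ᗮ) →L[ℂ] ↥(((Γ' ⊓ Γᗮ) ⊓ Nᗮ) ⊔ Γ)) v : W))) := by
  haveI : CompleteSpace Γ := hΓ.completeSpace_coe
  haveI : CompleteSpace Γ' := hΓ'.completeSpace_coe
  haveI : CompleteSpace N := hN.completeSpace_coe
  set F := Γ'ᗮ with hFdef
  set β := Γ' ⊓ Γᗮ with hβdef
  set E := β ⊓ Nᗮ with hEdef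
  set A := N ⊔ F with hAdef
  set B := E ⊔ Γ with hBdef
  have bot_of : ∀ (S : Submodule ℂ W) (x : W), x ∈ S → x ∈ Sᗮ → x = 0 :=
    fun S x h h' => inner_self_eq_zero.1 ((S.mem_orthogonal x).1 h' x h)
  have hβc : IsClosed (β : Set W) := by
    rw [hβdef, Submodule.coe_inf]
    exact hΓ'.inter Γ.isClosed_orthogonal
  have hEc : IsClosed (E : Set W) := by
    rw [hEdef, Submodule.coe_inf]
    exact hβc.inter N.isClosed_orthogonal
  have hNΓ : N ≤ Γᗮ := le_trans hNβ inf_le_right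
  have hNΓ' : N ≤ Γ' := le_trans hNβ inf_le_left
  have hΓorth : Γ ≤ Γᗮᗮ := Submodule.le_orthogonal_orthogonal Γ
  have hΓ'orth : Γ' ≤ Γ'ᗮᗮ := Submodule.le_orthogonal_orthogonal Γ'
  have hNorth : N ≤ Nᗮᗮ := Submodule.le_orthogonal_orthogonal N
  have hΓN : Γ ≤ Nᗮ := le_trans hΓorth (Submodule.orthogonal_le hNΓ)
  have hFN : F ≤ Nᗮ := Submodule.orthogonal_le hNΓ'
  have hFΓ : F ≤ Γᗮ := Submodule.orthogonal_le hle
  have hEβ : E ≤ β := inf_le_left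
  have hβΓ' : β ≤ Γ' := inf_le_left
  have hβΓ : β ≤ Γᗮ := inf_le_right
  have hEΓ' : E ≤ Γ' := le_trans hEβ hβΓ'
  have hEΓ : E ≤ Γᗮ := le_trans hEβ hβΓ
  have hEN : E ≤ Nᗮ := inf_le_right
  have hΓβ : Γ ≤ βᗮ := le_trans hΓorth (Submodule.orthogonal_le hβΓ)
  have hΓE : Γ ≤ Eᗮ := le_trans hΓorth (Submodule.orthogonal_le hEΓ)
  have hBΓ' : B ≤ Γ' := sup_le hEΓ' hle
  have hAΓ : A ≤ Γᗮ := sup_le hNΓ hFΓ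
  have hEB : E ≤ B := le_sup_left
  have hΓB : Γ ≤ B := le_sup_right
  have hsupβ : Γ ⊔ β = Γ' := by
    have h := Submodule.sup_orthogonal_inf_of_hasOrthogonalProjection hle
    rw [hβdef, inf_comm]
    exact h
  have hsupN : N ⊔ E = β := by
    have h := Submodule.sup_orthogonal_inf_of_hasOrthogonalProjection (K₁ := N) hNβ
    rw [hEdef, inf_comm]
    exact h
  have hABtop : A ⊔ B = ⊤ := by
    rw [hAdef, hBdef, sup_sup_sup_comm, hsupN, sup_comm F Γ, ← sup_assoc, sup_comm β Γ, hsupβ,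
      hFdef]
    exact Submodule.sup_orthogonal_of_hasOrthogonalProjection
  have hBA : B ≤ Aᗮ := by
    rw [hAdef, hBdef]
    refine sup_le ?_ ?_
    · exact (Submodule.isOrtho_sup_right.2 ⟨hEN, le_trans hEΓ' hΓ'orth⟩ : _ ≤ _)
    · exact (Submodule.isOrtho_sup_right.2 ⟨hΓN, le_trans hle hΓ'orth⟩ : _ ≤ _)
  have hAB : A ≤ Bᗮ := by
    rw [hAdef, hBdef]
    refine sup_le ?_ ?_
    · exact (Submodule.isOrtho_sup_right.2 ⟨le_trans hNorth (Submodule.orthogonal_le hEN),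
        hNΓ⟩ : _ ≤ _)
    · exact (Submodule.isOrtho_sup_right.2 ⟨Submodule.orthogonal_le hEΓ',
        Submodule.orthogonal_le hle⟩ : _ ≤ _)
  have hBperp : Aᗮ = B := by
    refine le_antisymm ?_ hBA
    intro x hx
    have hxtop : x ∈ A ⊔ B := by rw [hABtop]; trivial
    obtain ⟨a, ha, b, hb, rfl⟩ := Submodule.mem_sup.1 hxtop
    have ha' : a ∈ Aᗮ := by
      have heq : a = (a + b) - b := by abel
      rw [heq]
      exact Submodule.sub_mem _ hx (hBA hb)
    have ha0 : a = 0 := bot_of A a ha ha'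
    rw [ha0, zero_add]
    exact hb
  have hAperp : Bᗮ = A := by
    refine le_antisymm ?_ hAB
    intro x hx
    have hxtop : x ∈ A ⊔ B := by rw [hABtop]; trivial
    obtain ⟨a, ha, b, hb, rfl⟩ := Submodule.mem_sup.1 hxtop
    have hb' : b ∈ Bᗮ := by
      have heq : b = (a + b) - a := by abel
      rw [heq]
      exact Submodule.sub_mem _ hx (hAB ha)
    have hb0 : b = 0 := bot_of B b hb hb'
    rw [hb0, add_zero]
    exact ha
  have hAc : IsClosed (A : Set W) := hAperp ▸ B.isClosed_orthogonal
  have hBc : IsClosed (B : Set W) := hBperp ▸ A.isClosed_orthogonal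
  haveI : CompleteSpace A := hAc.completeSpace_coe
  haveI : CompleteSpace B := hBc.completeSpace_coe
  have hABbot : A ⊓ B = ⊥ := by rw [← hBperp]; exact A.inf_orthogonal_eq_bot
  constructor
  · intro M
    constructor
    · rintro ⟨hMc, ⟨hMΓc, hMΓbot, hMΓ'top⟩, hpush⟩
      haveI : CompleteSpace M := hMc.completeSpace_coe
      have hMBbot : M ⊓ B = ⊥ := by
        rw [Submodule.eq_bot_iff]
        rintro x ⟨hxM, hxB⟩
        have hxΓ' : x ∈ Γ' := hBΓ' hxB
        have hx1 : orthProj β x ∈ N := by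
          rw [← hpush]
          exact Submodule.mem_map_of_mem (show _ ∈ M ⊓ Γ' from ⟨hxM, hxΓ'⟩)
        obtain ⟨e, he, g, hg, rfl⟩ := Submodule.mem_sup.1 hxB
        have hPβ : orthProj β (e + g) = e := by
          rw [map_add, orthProj_eq_self β hβc (hEβ he), orthProj_eq_zero β hβc (hΓβ hg),
            add_zero]
        rw [hPβ] at hx1
        have he0 : e = 0 := bot_of N e hx1 (hEN he)
        have hmem : e + g ∈ M ⊓ Γ := ⟨hxM, by rw [he0, zero_add]; exact hg⟩
        rw [hMΓbot, Submodule.mem_bot] at hmem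
        exact hmem
      have hMBtop : M ⊔ B = ⊤ := by
        rw [eq_top_iff]
        rintro w -
        have hw : w ∈ M ⊔ Γ' := by rw [hMΓ'top]; trivial
        obtain ⟨m, hm, y, hy, rfl⟩ := Submodule.mem_sup.1 hw
        have hy' : y ∈ Γ ⊔ β := by rw [hsupβ]; exact hy
        obtain ⟨g, hg, p, hp, rfl⟩ := Submodule.mem_sup.1 hy'
        have hp' : p ∈ N ⊔ E := by rw [hsupN]; exact hp
        obtain ⟨n, hn, e, he, rfl⟩ := Submodule.mem_sup.1 hp'
        have hn' : n ∈ gammaPush Γ Γ' M := by rw [hpush]; exact hn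
        obtain ⟨x', hx', hPx'⟩ := Submodule.mem_map.1 (show n ∈ (M ⊓ Γ').map (orthProj β : W →ₗ[ℂ] W) from hn')
        have hx'Γβ : x' ∈ Γ ⊔ β := by rw [hsupβ]; exact hx'.2
        obtain ⟨g'', hg'', p', hp'', hx'eq⟩ := Submodule.mem_sup.1 hx'Γβ
        have hp'n : p' = n := by
          rw [← hPx', ContinuousLinearMap.coe_coe, ← hx'eq, map_add, orthProj_eq_zero β hβc (hΓβ hg''),
            orthProj_eq_self β hβc hp'', zero_add]
        refine Submodule.mem_sup.2 ⟨m + x', Submodule.add_mem M hm hx'.1,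
          e + (g - g''), Submodule.add_mem B (hEB he) (hΓB (Submodule.sub_mem Γ hg hg'')), ?_⟩
        rw [← hx'eq, hp'n]
        abel
      have hMBcompl : IsCompl M B := ⟨disjoint_iff.2 hMBbot, codisjoint_iff.2 hMBtop⟩
      set π := M.linearProjOfClosedCompl B hMBcompl hMc hBc with hπdef
      have hπm : ∀ m : W, m ∈ M → (π m : W) = m := by
        intro m hm
        rw [hπdef, Submodule.coe_continuous_linearProjOfClosedCompl']
        exact congrArg _ (Submodule.linearProjOfIsCompl_apply_left hMBcompl ⟨m, hm⟩)
      have hπb : ∀ b : W, b ∈ B → (π b : W) = 0 := by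
        intro b hb
        rw [hπdef, Submodule.coe_continuous_linearProjOfClosedCompl']
        rw [Submodule.linearProjOfIsCompl_apply_right' hMBcompl hb]
        rfl
      have hπsub : ∀ x : W, x - (π x : W) ∈ B := by
        intro x
        have hxtop : x ∈ M ⊔ B := by rw [hMBtop]; trivial
        obtain ⟨a, ha, b, hb, rfl⟩ := Submodule.mem_sup.1 hxtop
        have hπadd : ((π (a + b) : W)) = (π a : W) + (π b : W) := by
          rw [map_add, Submodule.coe_add]
        rw [hπadd, hπm a ha, hπb b hb, add_zero, add_sub_cancel_left]
        exact hb
      set μ₀ : ↥A →L[ℂ] ↥B :=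
        (B.orthogonalProjectionOnto).comp ((M.subtypeL.comp π).comp A.subtypeL) with hμ₀def
      have hμ₀app : ∀ v : ↥A, (μ₀ v : W) = (B.orthogonalProjectionOnto ((π (v : W) : W)) : W) :=
        fun v => rfl
      have hkey : ∀ v : ↥A, (v : W) + (μ₀ v : W) = (π (v : W) : W) := by
        intro v
        have hb : (π (v : W) : W) - (v : W) ∈ B := by
          have h := hπsub (v : W)
          have heq : (π (v : W) : W) - (v : W) = -((v : W) - (π (v : W) : W)) := by abel
          rw [heq]
          exact Submodule.neg_mem B h
        have hsplit : ((π (v : W)) : W) = (v : W) + ((π (v : W) : W) - (v : W)) := by abel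
        have h2 : (μ₀ v : W) = (π (v : W) : W) - (v : W) := by
          rw [hμ₀app v]
          conv_lhs => rw [hsplit]
          rw [map_add, Submodule.coe_add,
            Submodule.coe_orthogonalProjectionOnto_apply B ((π (v : W) : W) - (v : W)),
            Submodule.starProjection_eq_self_iff.2 hb,
            Submodule.orthogonalProjectionOnto_apply_of_mem_orthogonal (hAB v.2)]
          rw [ZeroMemClass.coe_zero, zero_add]
        rw [h2]
        abel
      have hgraph : (M : Set W) = Set.range (fun v : ↥A => (v : W) + (μ₀ v : W)) := by
        ext x
        simp only [Set.mem_range, SetLike.mem_coe]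
        constructor
        · intro hx
          refine ⟨A.orthogonalProjectionOnto x, ?_⟩
          set v : ↥A := A.orthogonalProjectionOnto x with hvdef
          have h1 : (v : W) + (μ₀ v : W) = (π (v : W) : W) := hkey v
          have hd : x - (π (v : W) : W) ∈ M := Submodule.sub_mem M hx (π (v : W)).2
          have hdB : x - (π (v : W) : W) ∈ B := by
            have h2 : x - (v : W) ∈ Aᗮ := Submodule.sub_starProjection_mem_orthogonal (K := A) x
            have h3 : x - (v : W) ∈ B := hBperp ▸ h2
            have heq : x - (π (v : W) : W) = (x - (v : W)) - (μ₀ v : W) := by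
              rw [← h1]; abel
            rw [heq]
            exact Submodule.sub_mem B h3 (μ₀ v).2
          have hmem : x - (π (v : W) : W) ∈ M ⊓ B := ⟨hd, hdB⟩
          rw [hMBbot, Submodule.mem_bot, sub_eq_zero] at hmem
          rw [h1]
          exact hmem.symm
        · rintro ⟨v, rfl⟩
          show (v : W) + (μ₀ v : W) ∈ M
          rw [hkey v]
          exact (π (v : W)).2
      have hprop : ∀ v : ↥A, (v : W) ∈ N → orthProj E ((μ₀ v : W)) = 0 := by
        intro v hv
        have hxM : (v : W) + (μ₀ v : W) ∈ M := by
          rw [hkey v]; exact (π (v : W)).2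
        have hxΓ' : (v : W) + (μ₀ v : W) ∈ Γ' :=
          Submodule.add_mem Γ' (hNΓ' hv) (hBΓ' (μ₀ v).2)
        have hx1 : orthProj β ((v : W) + (μ₀ v : W)) ∈ N := by
          rw [← hpush]
          exact Submodule.mem_map_of_mem (show _ ∈ M ⊓ Γ' from ⟨hxM, hxΓ'⟩)
        obtain ⟨e, he, g, hg, hμv⟩ := Submodule.mem_sup.1 (μ₀ v).2
        have hPβ : orthProj β ((v : W) + (μ₀ v : W)) = (v : W) + e := by
          rw [map_add, ← hμv, map_add, orthProj_eq_self β hβc (hNβ hv),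
            orthProj_eq_self β hβc (hEβ he), orthProj_eq_zero β hβc (hΓβ hg), add_zero]
        rw [hPβ] at hx1
        have heN : e ∈ N := by
          have h := N.sub_mem hx1 hv
          rwa [add_sub_cancel_left] at h
        have he0 : e = 0 := bot_of N e heN (hEN he)
        rw [← hμv, map_add, orthProj_eq_self E hEc he, orthProj_eq_zero E hEc (hΓE hg),
          add_zero, he0]
      refine ⟨μ₀, ⟨hgraph, hprop⟩, ?_⟩
      rintro μ' ⟨hgraph', hprop'⟩
      refine ContinuousLinearMap.ext fun v => ?_
      have h1 : (v : W) + (μ' v : W) ∈ (M : Set W) := by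
        rw [hgraph']
        exact ⟨v, rfl⟩
      rw [hgraph] at h1
      obtain ⟨v', hv'⟩ := h1
      have hd : (v : W) - (v' : W) = (μ₀ v' : W) - (μ' v : W) := by
        rw [sub_eq_sub_iff_add_eq_add]
        exact hv'.symm.trans (add_comm _ _)
      have hmemA : (v : W) - (v' : W) ∈ A := Submodule.sub_mem A v.2 v'.2
      have hmemB : (v : W) - (v' : W) ∈ B :=
        hd ▸ Submodule.sub_mem B (μ₀ v').2 (μ' v).2
      have h0 : (v : W) - (v' : W) = 0 := by
        have hmem : (v : W) - (v' : W) ∈ A ⊓ B := ⟨hmemA, hmemB⟩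
        rw [hABbot, Submodule.mem_bot] at hmem
        exact hmem
      have hvv' : v' = v := Subtype.ext (sub_eq_zero.1 h0).symm
      rw [hvv'] at hv'
      have hv'' : (v : W) + (μ₀ v : W) = (v : W) + (μ' v : W) := hv'
      exact Subtype.ext (add_left_cancel hv'').symm
    · rintro ⟨μ, ⟨hgraph, hprop⟩, -⟩
      set ψ : ↥A →L[ℂ] W := A.subtypeL + B.subtypeL.comp μ with hψdef
      have hψapp : ∀ v : ↥A, ψ v = (v : W) + (μ v : W) := fun v => rfl
      have hMrange : (M : Set W) = Set.range ψ := by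
        rw [hgraph]
        exact congrArg Set.range (funext fun v => (hψapp v).symm)
      have hinner : ∀ (v : ↥A) (b : W), b ∈ B → inner (𝕜 := ℂ) ((v : W)) b = 0 :=
        fun v b hb => (B.mem_orthogonal' _).1 (hAperp.ge v.2) b hb
      have hanti : AntilipschitzWith 1 ψ := by
        apply ψ.antilipschitz_of_bound
        intro v
        rw [NNReal.coe_one, one_mul, hψapp]
        exact norm_le_of_orth (hinner v _ (μ v).2)
      have hMc : IsClosed (M : Set W) := by
        rw [hMrange]
        exact hanti.isClosed_range ψ.uniformContinuous
      have hchar : ∀ v : ↥A, (v : W) ∈ N → (μ v : W) ∈ Γ := by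
        intro v hv
        obtain ⟨e, he, g, hg, hμv⟩ := Submodule.mem_sup.1 (μ v).2
        have hPE : orthProj E ((μ v : W)) = e := by
          rw [← hμv, map_add, orthProj_eq_self E hEc he, orthProj_eq_zero E hEc (hΓE hg),
            add_zero]
        have he0 : e = 0 := by rw [← hPE]; exact hprop v hv
        rw [← hμv, he0, zero_add]
        exact hg
      refine ⟨hMc, ⟨?_, ?_, ?_⟩, ?_⟩
      · -- M ⊔ Γ closed
        set θ : ↥A →L[ℂ] W := A.subtypeL + (orthProj E).comp (B.subtypeL.comp μ) with hθdef
        have hθapp : ∀ v : ↥A, θ v = (v : W) + orthProj E ((μ v : W)) := fun v => rfl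
        have hEmem : ∀ v : ↥A, orthProj E ((μ v : W)) ∈ E := fun v => orthProj_mem E hEc _
        set G : Submodule ℂ W := LinearMap.range (θ : ↥A →ₗ[ℂ] W) with hGdef
        have hPEform : ∀ v : ↥A, (μ v : W) - orthProj E ((μ v : W)) ∈ Γ := by
          intro v
          obtain ⟨e, he, g, hg, hμv⟩ := Submodule.mem_sup.1 (μ v).2
          have hPE : orthProj E ((μ v : W)) = e := by
            rw [← hμv, map_add, orthProj_eq_self E hEc he, orthProj_eq_zero E hEc (hΓE hg),
              add_zero]
          rw [hPE, ← hμv, add_sub_cancel_left]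
          exact hg
        have hMG : M ⊔ Γ = G ⊔ Γ := by
          apply le_antisymm
          · refine sup_le ?_ le_sup_right
            intro x hx
            have hx' : x ∈ (M : Set W) := hx
            rw [hgraph] at hx'
            obtain ⟨v, rfl⟩ := hx'
            have heq : (v : W) + (μ v : W) =
                θ v + ((μ v : W) - orthProj E ((μ v : W))) := by
              rw [hθapp]; abel
            show (v : W) + (μ v : W) ∈ G ⊔ Γ
            rw [heq]
            exact Submodule.add_mem_sup (LinearMap.mem_range_self _ v) (hPEform v)
          · refine sup_le ?_ le_sup_right
            rintro x ⟨v, rfl⟩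
            have hxM : (v : W) + (μ v : W) ∈ M := by
              have : (v : W) + (μ v : W) ∈ (M : Set W) := by
                rw [hgraph]; exact ⟨v, rfl⟩
              exact this
            have heq : θ v = ((v : W) + (μ v : W)) -
                ((μ v : W) - orthProj E ((μ v : W))) := by
              rw [hθapp]; abel
            rw [ContinuousLinearMap.coe_coe, heq]
            exact Submodule.sub_mem _ (Submodule.mem_sup_left hxM)
              (Submodule.mem_sup_right (hPEform v))
        rw [hMG]
        have hGΓ : G ≤ Γᗮ := by
          rintro x ⟨v, rfl⟩
          exact Submodule.add_mem Γᗮ (hAΓ v.2) (hEΓ (hEmem v))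
        have hGc : IsClosed (G : Set W) := by
          have hanti' : AntilipschitzWith 1 θ := by
            apply θ.antilipschitz_of_bound
            intro v
            rw [NNReal.coe_one, one_mul, hθapp]
            exact norm_le_of_orth (hinner v _ (hEB (hEmem v)))
          have hGr : (G : Set W) = Set.range θ := by
            rw [hGdef]
            exact LinearMap.coe_range _
          rw [hGr]
          exact hanti'.isClosed_range θ.uniformContinuous
        exact isClosed_sup_orth G Γ hGc hΓ hGΓ
      · -- M ⊓ Γ = ⊥
        rw [Submodule.eq_bot_iff]
        rintro x ⟨hxM, hxΓ⟩
        have hx' : x ∈ (M : Set W) := hxM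
        rw [hgraph] at hx'
        obtain ⟨v, rfl⟩ := hx'
        have hvB : (v : W) ∈ B := by
          have heq : (v : W) = ((v : W) + (μ v : W)) - (μ v : W) := by abel
          rw [heq]
          exact Submodule.sub_mem B (hΓB hxΓ) (μ v).2
        have hv0 : (v : W) = 0 := by
          have hmem : (v : W) ∈ A ⊓ B := ⟨v.2, hvB⟩
          rw [hABbot, Submodule.mem_bot] at hmem
          exact hmem
        have hv0' : v = 0 := Subtype.ext hv0
        show (v : W) + (μ v : W) = 0
        rw [hv0', map_zero]
        simp
      · -- M ⊔ Γ' = ⊤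
        rw [eq_top_iff]
        rintro w -
        set a : ↥A := A.orthogonalProjectionOnto w with hadef
        have hb : w - (a : W) ∈ B := hBperp ▸ Submodule.sub_starProjection_mem_orthogonal (K := A) w
        have haM : (a : W) + (μ a : W) ∈ M := by
          have : (a : W) + (μ a : W) ∈ (M : Set W) := by
            rw [hgraph]; exact ⟨a, rfl⟩
          exact this
        refine Submodule.mem_sup.2 ⟨(a : W) + (μ a : W), haM,
          (w - (a : W)) - (μ a : W), hBΓ' (Submodule.sub_mem B hb (μ a).2), by abel⟩
      · -- gammaPush = N
        apply le_antisymm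
        · rintro x hx
          obtain ⟨y, hy, hPy⟩ := Submodule.mem_map.1 (show x ∈ (M ⊓ Γ').map (orthProj β : W →ₗ[ℂ] W) from hx)
          have hy' : y ∈ (M : Set W) := hy.1
          rw [hgraph] at hy'
          obtain ⟨v, hveq0⟩ := hy'
          have hveq : (v : W) + (μ v : W) = y := hveq0
          obtain ⟨n, hn, f, hf, hvnf⟩ := Submodule.mem_sup.1 v.2
          have hfΓ' : f ∈ Γ' := by
            have heq : f = y - n - (μ v : W) := by rw [← hveq, ← hvnf]; abel
            rw [heq]
            exact Submodule.sub_mem Γ' (Submodule.sub_mem Γ' hy.2 (hNΓ' hn)) (hBΓ' (μ v).2)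
          have hf0 : f = 0 := bot_of Γ' f hfΓ' hf
          have hvN : (v : W) ∈ N := by rw [← hvnf, hf0, add_zero]; exact hn
          have hμΓ : (μ v : W) ∈ Γ := hchar v hvN
          have hPβy : orthProj β y = (v : W) := by
            rw [← hveq, map_add, orthProj_eq_self β hβc (hNβ hvN),
              orthProj_eq_zero β hβc (hΓβ hμΓ), add_zero]
          have hPy' : orthProj β y = x := hPy
          rw [← hPy', hPβy]
          exact hvN
        · intro n hn
          set v : ↥A := ⟨n, Submodule.mem_sup_left hn⟩ with hvdef
          have hxM : (v : W) + (μ v : W) ∈ M := by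
            have : (v : W) + (μ v : W) ∈ (M : Set W) := by
              rw [hgraph]; exact ⟨v, rfl⟩
            exact this
          have hμΓ : (μ v : W) ∈ Γ := hchar v hn
          have hxΓ' : (v : W) + (μ v : W) ∈ Γ' :=
            Submodule.add_mem Γ' (hNΓ' hn) (hle hμΓ)
          show n ∈ (M ⊓ Γ').map (orthProj β : W →ₗ[ℂ] W)
          refine Submodule.mem_map.2 ⟨(v : W) + (μ v : W), ⟨hxM, hxΓ'⟩, ?_⟩
          show orthProj β ((v : W) + (μ v : W)) = n
          rw [map_add, orthProj_eq_self β hβc (hNβ hn),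
            orthProj_eq_zero β hβc (hΓβ hμΓ), add_zero]
  · ext x
    simp only [Set.mem_range, ContinuousLinearMap.zero_apply, ZeroMemClass.coe_zero, add_zero,
      SetLike.mem_coe]
    exact ⟨fun hx => ⟨⟨x, hx⟩, rfl⟩, fun ⟨v, hv⟩ => hv ▸ v.2⟩
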